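/- arXiv:1506.03171 — 5 statements merged into one kernel-verified Lean document; each statement's English description precedes it below -/
import Mathlib

section
/- Random parity-check collision bound (Proposition 3.1): Let n and k ≤ n be natural numbers, let S be a finite subset of 𝔽₂ⁿ, and fix z ∈ S. Then the number of matrices H ∈ 𝔽₂^{(n−k)×n} for which there exists z' ∈ S with z' ≠ z and H·z = H·z' (matrix–vector product over 𝔽₂) is at most (|S| − 1)·2^{(n−k)(n−1)}. In particular, if |S| = 2^m then the fraction of such matrices among all 2^{(n−k)n} matrices is at most 2^{−(n−k−m)}. -/
open Matrix Finset Module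

lemma dot_kernel_card (n : ℕ) (d : Fin n → ZMod 2) (hd : d ≠ 0) :
    Fintype.card {w : Fin n → ZMod 2 // dotProduct w d = 0} = 2 ^ (n - 1) := by
  classical
  let φ : (Fin n → ZMod 2) →ₗ[ZMod 2] ZMod 2 :=
    { toFun := fun w => dotProduct w d
      map_add' := fun x y => add_dotProduct x y d
      map_smul' := fun c x => smul_dotProduct c x d }
  have hφsurj : Function.Surjective φ := by
    obtain ⟨i, hi⟩ : ∃ i, d i ≠ 0 := by
      by_contra h
      push_neg at h
      exact hd (funext h)
    have hdi : d i = 1 := by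
      have h2 : ∀ x : ZMod 2, x ≠ 0 → x = 1 := by decide
      exact h2 _ hi
    intro c
    exact ⟨Pi.single i c, by simp [φ, single_dotProduct, hdi]⟩
  have hrange : LinearMap.range φ = ⊤ := LinearMap.range_eq_top.mpr hφsurj
  have hrank := LinearMap.finrank_range_add_finrank_ker φ
  rw [hrange, finrank_top] at hrank
  have h1 : finrank (ZMod 2) (ZMod 2) = 1 := finrank_self _
  have hpi : finrank (ZMod 2) (Fin n → ZMod 2) = n := finrank_fin_fun _
  have hker : finrank (ZMod 2) (LinearMap.ker φ) = n - 1 := by omega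
  have : Fintype.card (LinearMap.ker φ) = 2 ^ (n - 1) := by
    rw [card_eq_pow_finrank (K := ZMod 2), hker, ZMod.card]
  rw [← this]
  exact Fintype.card_congr (Equiv.subtypeEquivRight fun w => by simp [LinearMap.mem_ker, φ])

lemma matrix_kernel_card (r n : ℕ) (d : Fin n → ZMod 2) (hd : d ≠ 0) :
    Fintype.card {H : Matrix (Fin r) (Fin n) (ZMod 2) // H.mulVec d = 0} = 2 ^ (r * (n - 1)) := by
  classical
  have e : {H : Matrix (Fin r) (Fin n) (ZMod 2) // H.mulVec d = 0} ≃
      (Fin r → {w : Fin n → ZMod 2 // dotProduct w d = 0}) :=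
    (Equiv.subtypeEquivRight (fun H => by
      simp [Matrix.mulVec, funext_iff])).trans (Equiv.subtypePiEquivPi)
  rw [Fintype.card_congr e, Fintype.card_pi]
  simp [dot_kernel_card n d hd, ← pow_mul, mul_comm]

open Classical in
/-- Random parity-check collision bound (Proposition 3.1). -/
theorem random_parity_check_collision_bound
    (n k m : ℕ) (hk : k ≤ n) (S : Finset (Fin n → ZMod 2))
    (z : Fin n → ZMod 2) (hz : z ∈ S) :
    Nat.card {H : Matrix (Fin (n - k)) (Fin n) (ZMod 2) //
        ∃ z' ∈ S, z' ≠ z ∧ H.mulVec z = H.mulVec z'} ≤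
      (S.card - 1) * 2 ^ ((n - k) * (n - 1)) ∧
    (S.card = 2 ^ m →
      (Nat.card {H : Matrix (Fin (n - k)) (Fin n) (ZMod 2) //
          ∃ z' ∈ S, z' ≠ z ∧ H.mulVec z = H.mulVec z'} : ℝ) /
        2 ^ ((n - k) * n) ≤ (2 : ℝ) ^ (-((n : ℤ) - k - m))) := by
  classical
  have key : Nat.card {H : Matrix (Fin (n - k)) (Fin n) (ZMod 2) //
        ∃ z' ∈ S, z' ≠ z ∧ H.mulVec z = H.mulVec z'} ≤
      (S.card - 1) * 2 ^ ((n - k) * (n - 1)) := by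
    rw [Nat.card_eq_fintype_card, Fintype.card_subtype]
    calc (univ.filter (fun H : Matrix (Fin (n - k)) (Fin n) (ZMod 2) =>
            ∃ z' ∈ S, z' ≠ z ∧ H.mulVec z = H.mulVec z')).card
        ≤ ((S.erase z).biUnion (fun z' => univ.filter
            (fun H : Matrix (Fin (n - k)) (Fin n) (ZMod 2) =>
              H.mulVec z = H.mulVec z'))).card := by
          apply card_le_card
          intro H hH
          simp only [mem_filter, mem_univ, true_and] at hH
          obtain ⟨z', hz', hne, heq⟩ := hH
          exact mem_biUnion.mpr ⟨z', mem_erase.mpr ⟨hne, hz'⟩, by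
            simp only [mem_filter, mem_univ, true_and]; exact heq⟩
      _ ≤ ∑ z' ∈ S.erase z, (univ.filter
            (fun H : Matrix (Fin (n - k)) (Fin n) (ZMod 2) =>
              H.mulVec z = H.mulVec z')).card := card_biUnion_le
      _ ≤ ∑ _z' ∈ S.erase z, 2 ^ ((n - k) * (n - 1)) := by
          apply sum_le_sum
          intro z' hz'
          have hne : z - z' ≠ 0 := sub_ne_zero.mpr (fun h => (mem_erase.mp hz').1 h.symm)
          have hcard : (univ.filter
              (fun H : Matrix (Fin (n - k)) (Fin n) (ZMod 2) =>
                H.mulVec z = H.mulVec z')).card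
              = Fintype.card {H : Matrix (Fin (n - k)) (Fin n) (ZMod 2) //
                  H.mulVec (z - z') = 0} := by
            rw [← Fintype.card_subtype]
            exact Fintype.card_congr (Equiv.subtypeEquivRight (fun H => by
              rw [Matrix.mulVec_sub, sub_eq_zero]))
          rw [hcard, matrix_kernel_card _ _ _ hne]
      _ = (S.card - 1) * 2 ^ ((n - k) * (n - 1)) := by
          rw [sum_const, card_erase_of_mem hz, smul_eq_mul]
  refine ⟨key, fun hS => ?_⟩
  have hpow : (n - k) * (n - 1) + (n - k) = (n - k) * n := by
    cases n with
    | zero => simp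
    | succ p => simp [Nat.mul_succ]
  have h1 : Nat.card {H : Matrix (Fin (n - k)) (Fin n) (ZMod 2) //
        ∃ z' ∈ S, z' ≠ z ∧ H.mulVec z = H.mulVec z'}
      ≤ 2 ^ (m + (n - k) * (n - 1)) := by
    refine key.trans ?_
    rw [hS, pow_add]
    exact Nat.mul_le_mul_right _ (Nat.sub_le _ _)
  rw [div_le_iff₀ (by positivity)]
  calc (Nat.card {H : Matrix (Fin (n - k)) (Fin n) (ZMod 2) //
          ∃ z' ∈ S, z' ≠ z ∧ H.mulVec z = H.mulVec z'} : ℝ)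
      ≤ (2 : ℝ) ^ (m + (n - k) * (n - 1)) := by exact_mod_cast h1
    _ = (2 : ℝ) ^ (-((n : ℤ) - k - m)) * 2 ^ ((n - k) * n) := by
        rw [← zpow_natCast (2 : ℝ) ((n - k) * n),
          ← zpow_natCast (2 : ℝ) (m + (n - k) * (n - 1)),
          ← zpow_add₀ (by norm_num : (2 : ℝ) ≠ 0)]
        congr 1
        generalize hA : (n - k) * (n - 1) = A at hpow ⊢
        generalize hB : (n - k) * n = B at hpow ⊢
        omega
end

section
/- Abundance of good parity-check matrices (claim following Proposition 3.1): Let n and k ≤ n be natural numbers, let S ⊆ 𝔽₂ⁿ be a finite set with |S| = 2^m, and set t = n − k − m (assume t ≥ 0). Call z ∈ S bad for a matrix H ∈ 𝔽₂^{(n−k)×n} if there exists z' ∈ S with z' ≠ z and H·z = H·z'. Then the number of matrices H ∈ 𝔽₂^{(n−k)×n} for which more than a 2^{−t/2}-fraction of the elements of S are bad (i.e., the number of bad z exceeds 2^{−t/2}·2^m) is at most 2^{−t/2}·2^{(n−k)n}. Equivalently, for at least a (1 − 2^{−t/2})-fraction of matrices H, at most a 2^{−t/2}-fraction of z ∈ S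 have a syndrome collision within S. -/
/-!
For `v ≠ 0` the map `H ↦ H *ᵥ v` is a surjective linear map onto `𝔽₂^(n-k)`, so `H z = H z'`
for a `2^{-(n-k)}`-fraction of the matrices `H` whenever `z' ≠ z`. A union bound over `z' ∈ S`
makes each `z ∈ S` collide for at most a `2^m · 2^{-(n-k)} = 2^{-t}`-fraction of the `H`, so
on average over `H` at most `2^{-t} · 2^m` elements of `S` collide, and Markov's inequality at
the threshold `2^{-t/2} · 2^m` bounds the proportion of bad matrices by `2^{-t/2}`.
-/

open Finset Matrix

theorem natCard_lt_mul_le_sum {α : Type*} [Fintype α] (f : α → ℝ) (hf : 0 ≤ f) (θ : ℝ) :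
    Nat.card {a // θ < f a} * θ ≤ ∑ a, f a := by
  classical
  rw [Nat.card_eq_fintype_card, Fintype.card_subtype]
  calc #{a | θ < f a} * θ ≤ ∑ a with θ < f a, f a := by
        simpa using card_nsmul_le_sum _ f θ fun a ha => (mem_filter.mp ha).2.le
    _ ≤ ∑ a, f a := sum_le_sum_of_subset_of_nonneg (filter_subset _ _) fun a _ _ => hf a

section

variable {F ι κ : Type*} [Field F] [Fintype κ]

theorem Matrix.mulVec_left_surjective {v : κ → F} (hv : v ≠ 0) :
    Function.Surjective (fun H : Matrix ι κ F => H *ᵥ v) := by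
  classical
  obtain ⟨j, hj⟩ := Function.ne_iff.mp hv
  refine fun w => ⟨Matrix.of fun i l => if l = j then w i / v j else 0, funext fun i => ?_⟩
  simp [Matrix.mulVec, dotProduct, div_mul_cancel₀ _ hj]

variable [Fintype F] [Fintype ι]

theorem Matrix.natCard_mulVec_eq_zero_mul {v : κ → F} (hv : v ≠ 0) :
    Nat.card {H : Matrix ι κ F // H *ᵥ v = 0} * Fintype.card F ^ Fintype.card ι =
      Fintype.card F ^ (Fintype.card ι * Fintype.card κ) := by
  set f := Matrix.mulVec.addMonoidHomLeft (m := ι) v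
  have key := f.ker.card_mul_index
  rw [AddSubgroup.index_ker, AddMonoidHom.range_eq_top.mpr (mulVec_left_surjective hv),
    Nat.card_congr AddSubgroup.topEquiv.toEquiv] at key
  change Nat.card {H : Matrix ι κ F // H *ᵥ v = 0} * _ = Nat.card (ι → κ → F) at key
  simp only [Nat.card_fun, Nat.card_eq_fintype_card] at key
  rwa [mul_comm (Fintype.card ι), pow_mul]

def HasSyndromeCollision (S : Finset (κ → F)) (H : Matrix ι κ F) (z : κ → F) : Prop :=
  ∃ z' ∈ S, z' ≠ z ∧ H *ᵥ z = H *ᵥ z'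

-- Unfolds to the instance inferred for the bare existential, so filters stated with either agree.
instance [DecidableEq F] (S : Finset (κ → F)) (H : Matrix ι κ F) :
    DecidablePred (HasSyndromeCollision S H) :=
  fun z => inferInstanceAs (Decidable (∃ z' ∈ S, z' ≠ z ∧ H *ᵥ z = H *ᵥ z'))

theorem natCard_hasSyndromeCollision_mul_le (S : Finset (κ → F)) (z : κ → F) :
    Nat.card {H : Matrix ι κ F // HasSyndromeCollision S H z} * Fintype.card F ^ Fintype.card ι ≤
      #S * Fintype.card F ^ (Fintype.card ι * Fintype.card κ) := by
  classical
  have hsub : ({H | HasSyndromeCollision S H z} : Finset (Matrix ι κ F)) ⊆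
      (S.erase z).biUnion fun z' => {H | H *ᵥ (z - z') = 0} := by
    intro H hH
    obtain ⟨z', hz', hne, heq⟩ := (mem_filter.mp hH).2
    simp only [mem_biUnion, mem_erase, mem_filter, mem_univ, true_and]
    exact ⟨z', ⟨hne, hz'⟩, by rw [mulVec_sub, heq, sub_self]⟩
  rw [Nat.card_eq_fintype_card, Fintype.card_subtype]
  calc #{H : Matrix ι κ F | HasSyndromeCollision S H z} * Fintype.card F ^ Fintype.card ι
      ≤ ∑ z' ∈ S.erase z, #{H : Matrix ι κ F | H *ᵥ (z - z') = 0} *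
          Fintype.card F ^ Fintype.card ι := by
        rw [← sum_mul]
        gcongr
        exact (card_le_card hsub).trans card_biUnion_le
    _ = ∑ z' ∈ S.erase z, Fintype.card F ^ (Fintype.card ι * Fintype.card κ) := by
        refine sum_congr rfl fun z' hz' => ?_
        rw [← Fintype.card_subtype, ← Nat.card_eq_fintype_card]
        exact natCard_mulVec_eq_zero_mul (sub_ne_zero.mpr (ne_of_mem_erase hz').symm)
    _ ≤ #S * Fintype.card F ^ (Fintype.card ι * Fintype.card κ) := by
        rw [sum_const, smul_eq_mul]
        gcongr
        exact erase_subset z S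

theorem sum_card_hasSyndromeCollision_mul_le [DecidableEq ι] [DecidableEq κ] [DecidableEq F]
    (S : Finset (κ → F)) :
    (∑ H : Matrix ι κ F, #{z ∈ S | HasSyndromeCollision S H z}) * Fintype.card F ^ Fintype.card ι ≤
      #S ^ 2 * Fintype.card F ^ (Fintype.card ι * Fintype.card κ) := by
  classical
  have hswap : ∑ H : Matrix ι κ F, #{z ∈ S | HasSyndromeCollision S H z} =
      ∑ z ∈ S, Nat.card {H : Matrix ι κ F // HasSyndromeCollision S H z} := by
    simp only [Nat.card_eq_fintype_card, Fintype.card_subtype, card_filter]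
    exact sum_comm
  calc (∑ H : Matrix ι κ F, #{z ∈ S | HasSyndromeCollision S H z}) * Fintype.card F ^ Fintype.card ι
      ≤ ∑ _z ∈ S, #S * Fintype.card F ^ (Fintype.card ι * Fintype.card κ) := by
        rw [hswap, sum_mul]
        exact sum_le_sum fun z _ => natCard_hasSyndromeCollision_mul_le S z
    _ = #S ^ 2 * Fintype.card F ^ (Fintype.card ι * Fintype.card κ) := by
        rw [sum_const, smul_eq_mul, ← mul_assoc, sq]

end

theorem Real.rpow_neg_half_mul_self_mul_pow {x : ℝ} (hx : 0 < x) (t : ℕ) :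
    x ^ (-(t : ℝ) / 2) * x ^ (-(t : ℝ) / 2) * x ^ t = 1 := by
  rw [← Real.rpow_add hx, ← Real.rpow_natCast, ← Real.rpow_add hx]
  norm_num

open Classical in
theorem abundance_of_good_parity_check_matrices_general
    (n k m t : ℕ) (hm : k + m ≤ n) (ht : t = n - k - m)
    (S : Finset (Fin n → ZMod 2)) (hS : S.card = 2 ^ m) :
    (Nat.card {H : Matrix (Fin (n - k)) (Fin n) (ZMod 2) //
        (2 : ℝ) ^ (-(t : ℝ) / 2) * 2 ^ m <
          ((S.filter (fun z => ∃ z' ∈ S, z' ≠ z ∧ H.mulVec z = H.mulVec z')).card : ℝ)} : ℝ) ≤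
      (2 : ℝ) ^ (-(t : ℝ) / 2) * 2 ^ ((n - k) * n) := by
  set T : ℝ := (2 : ℝ) ^ (-(t : ℝ) / 2)
  set N : ℕ := ∑ H : Matrix (Fin (n - k)) (Fin n) (ZMod 2),
    #{z ∈ S | HasSyndromeCollision S H z}
  have hcollisions : (N : ℝ) * (2 ^ t * 2 ^ m) ≤ 2 ^ m * 2 ^ m * 2 ^ ((n - k) * n) := by
    have := sum_card_hasSyndromeCollision_mul_le (ι := Fin (n - k)) S
    simp only [ZMod.card, Fintype.card_fin, hS] at this
    rw [← pow_add, show t + m = n - k by omega]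
    exact_mod_cast this.trans_eq (by ring)
  have hmarkov := natCard_lt_mul_le_sum
    (fun H : Matrix (Fin (n - k)) (Fin n) (ZMod 2) => (#{z ∈ S | HasSyndromeCollision S H z} : ℝ))
    (fun _ => Nat.cast_nonneg _) (T * 2 ^ m)
  set x : ℝ := (Nat.card {H : Matrix (Fin (n - k)) (Fin n) (ZMod 2) //
    T * 2 ^ m < (#{z ∈ S | HasSyndromeCollision S H z} : ℝ)} : ℝ)
  have hbad : x * T * 2 ^ t ≤ 2 ^ ((n - k) * n) := by
    refine le_of_mul_le_mul_left ?_ (by positivity : (0 : ℝ) < 2 ^ m * 2 ^ m)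
    calc 2 ^ m * 2 ^ m * (x * T * 2 ^ t) = x * (T * 2 ^ m) * (2 ^ t * 2 ^ m) := by ring
      _ ≤ N * (2 ^ t * 2 ^ m) := by
          gcongr
          simpa only [N, Nat.cast_sum] using hmarkov
      _ ≤ 2 ^ m * 2 ^ m * 2 ^ ((n - k) * n) := hcollisions
  change x ≤ _
  calc x = T * (x * T * 2 ^ t) := by
        linear_combination (-x) * Real.rpow_neg_half_mul_self_mul_pow two_pos t
    _ ≤ T * 2 ^ ((n - k) * n) := by gcongr

open Classical in
/-- Abundance of good parity-check matrices (claim following Proposition 3.1). -/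
theorem abundance_of_good_parity_check_matrices
    (n k m t : ℕ) (hk : k ≤ n) (hm : k + m ≤ n) (ht : t = n - k - m)
    (S : Finset (Fin n → ZMod 2)) (hS : S.card = 2 ^ m) :
    (Nat.card {H : Matrix (Fin (n - k)) (Fin n) (ZMod 2) //
        (2 : ℝ) ^ (-(t : ℝ) / 2) * 2 ^ m <
          ((S.filter (fun z => ∃ z' ∈ S, z' ≠ z ∧ H.mulVec z = H.mulVec z')).card : ℝ)} : ℝ) ≤
      (2 : ℝ) ^ (-(t : ℝ) / 2) * 2 ^ ((n - k) * n) :=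
  abundance_of_good_parity_check_matrices_general n k m t hm ht S hS
end

section
/- Existence of good linear codes for flat errors (Proposition 3.2): Let n, m, k be natural numbers and ε ∈ (0,1] a real number with k ≤ n and (k : ℝ) ≤ n − m − 2·log₂(1/ε), and let S ⊆ 𝔽₂ⁿ be a finite set with |S| = 2^m. Then there exist an injective linear encoder Enc : 𝔽₂ᵏ → 𝔽₂ⁿ and a decoder Dec : 𝔽₂ⁿ → 𝔽₂ᵏ such that for every message x ∈ 𝔽₂ᵏ, the number of z ∈ S with Dec(Enc(x) + z) ≠ x is at most ε·2^m. That is, every flat distribution of entropy m over 𝔽₂ⁿ is correctable with error ε by a linear code of any rate R ≤ 1 − m/n − 2·log₂(1/ε)/n. -/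
/-!
Choose the encoder `E` uniformly among all linear maps `𝔽₂ᵏ → 𝔽₂ⁿ`. For `w ≠ 0` the codeword
`E w` is uniform on `𝔽₂ⁿ`, so a given error `z ∈ S` has `z + E w ∈ S` for some `w ≠ 0` with
probability at most `2ᵏ · 2ᵐ / 2ⁿ ≤ ε²`. Hence some `E` has fewer than `ε² · 2ᵐ ≤ ε · 2ᵐ` such
confusable errors. This `E` is injective, since a nonzero kernel vector would make every error
confusable, and the decoder returning any `x` with `y - E x ∈ S` fails only on confusable errors.
-/

open Finset

section LinearCodes

variable {K U V : Type*} [Field K] [AddCommGroup U] [Module K U] [AddCommGroup V] [Module K V]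

theorem exists_linearMap_apply_eq {w : U} (hw : w ≠ 0) (v : V) :
    ∃ E : U →ₗ[K] V, E w = v := by
  obtain ⟨f, hf⟩ := Module.Projective.exists_dual_eq_one K hw
  exact ⟨f.smulRight v, by simp [hf]⟩

theorem card_filter_linearMap_apply_eq_mul [Fintype V] [DecidableEq V] [Fintype (U →ₗ[K] V)]
    {w : U} (hw : w ≠ 0) (v : V) :
    #{E : U →ₗ[K] V | E w = v} * Fintype.card V = Fintype.card (U →ₗ[K] V) := by
  have hfiber (v' : V) : #{E : U →ₗ[K] V | E w = v'} = #{E : U →ₗ[K] V | E w = v} :=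
    AddMonoidHom.card_fiber_eq_of_mem_range (LinearMap.applyₗ (R := K) w).toAddMonoidHom
      (exists_linearMap_apply_eq hw v') (exists_linearMap_apply_eq hw v)
  rw [← card_univ (α := U →ₗ[K] V),
    card_eq_sum_card_fiberwise (f := fun E : U →ₗ[K] V => E w) (s := univ) (t := univ)
      (fun _ _ => mem_univ _)]
  simp [hfiber, mul_comm]

theorem card_filter_add_linearMap_apply_mem_mul [Fintype V] [DecidableEq V]
    [Fintype (U →ₗ[K] V)] {w : U} (hw : w ≠ 0) (z : V) (S : Finset V) :
    #{E : U →ₗ[K] V | z + E w ∈ S} * Fintype.card V = #S * Fintype.card (U →ₗ[K] V) := by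
  rw [← sum_card_fiberwise_eq_card_filter, sum_mul, ← smul_eq_mul, ← sum_const]
  refine sum_congr rfl fun s _ => ?_
  rw [← card_filter_linearMap_apply_eq_mul hw (s - z)]
  congr 2
  ext E
  simp [eq_sub_iff_add_eq']

open Classical in
noncomputable def confusableErrors (E : U →ₗ[K] V) (S : Finset V) : Finset V :=
  {z ∈ S | ∃ w ≠ 0, z + E w ∈ S}

theorem card_confusableErrors_le [Fintype U] [DecidableEq U] [DecidableEq V] (E : U →ₗ[K] V)
    (S : Finset V) :
    #(confusableErrors E S) ≤ ∑ w ∈ {w | w ≠ 0}, #{z ∈ S | z + E w ∈ S} := by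
  refine (card_le_card fun z hz => ?_).trans card_biUnion_le
  simp only [confusableErrors, mem_filter] at hz
  obtain ⟨hzS, w, hw, hwS⟩ := hz
  exact mem_biUnion.2 ⟨w, by simpa using hw, mem_filter.2 ⟨hzS, hwS⟩⟩

theorem sum_card_confusableErrors_mul_le [Fintype U] [DecidableEq U] [Fintype V] [DecidableEq V]
    [Fintype (U →ₗ[K] V)] (S : Finset V) :
    (∑ E : U →ₗ[K] V, #(confusableErrors E S)) * Fintype.card V ≤
      (Fintype.card U - 1) * #S ^ 2 * Fintype.card (U →ₗ[K] V) := by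
  calc (∑ E : U →ₗ[K] V, #(confusableErrors E S)) * Fintype.card V
      ≤ (∑ E : U →ₗ[K] V, ∑ w ∈ {w | w ≠ 0}, #{z ∈ S | z + E w ∈ S}) * Fintype.card V := by
        gcongr with E
        exact card_confusableErrors_le E S
    _ = (∑ w ∈ {w : U | w ≠ 0}, ∑ z ∈ S, #{E : U →ₗ[K] V | z + E w ∈ S}) *
          Fintype.card V := by
        rw [sum_comm]
        congr 1
        refine sum_congr rfl fun w _ => ?_
        exact sum_card_bipartiteAbove_eq_sum_card_bipartiteBelow
          (fun (E : U →ₗ[K] V) z => z + E w ∈ S)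
    _ = ∑ w ∈ {w : U | w ≠ 0}, ∑ z ∈ S, #S * Fintype.card (U →ₗ[K] V) := by
        simp only [sum_mul]
        refine sum_congr rfl fun w hw => sum_congr rfl fun z _ => ?_
        exact card_filter_add_linearMap_apply_mem_mul (mem_filter.1 hw).2 z S
    _ = (Fintype.card U - 1) * #S ^ 2 * Fintype.card (U →ₗ[K] V) := by
        rw [sum_const, sum_const, filter_ne', card_erase_of_mem (mem_univ _), card_univ]
        simp only [smul_eq_mul]
        ring

theorem exists_card_confusableErrors_mul_lt [Fintype U] [Fintype V] {S : Finset V}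
    (hS : S.Nonempty) :
    ∃ E : U →ₗ[K] V, #(confusableErrors E S) * Fintype.card V < Fintype.card U * #S ^ 2 := by
  classical
  let := @Fintype.ofFinite (U →ₗ[K] V) (DFunLike.finite _)
  obtain ⟨E, -, hE⟩ := exists_le_of_sum_le (s := univ) univ_nonempty
    (f := fun E : U →ₗ[K] V => #(confusableErrors E S) * Fintype.card V)
    (g := fun _ => (Fintype.card U - 1) * #S ^ 2)
    (by simpa [← sum_mul, mul_comm] using sum_card_confusableErrors_mul_le (K := K) S)
  exact ⟨E, hE.trans_lt <| Nat.mul_lt_mul_of_pos_right (Nat.sub_lt Fintype.card_pos one_pos)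
    (pow_pos hS.card_pos 2)⟩

theorem injective_of_card_confusableErrors_lt {E : U →ₗ[K] V} {S : Finset V}
    (h : #(confusableErrors E S) < #S) : Function.Injective E := by
  rw [injective_iff_map_eq_zero]
  by_contra! ⟨w, hEw, hw⟩
  refine h.not_ge (card_le_card fun z hz => ?_)
  simp only [confusableErrors, mem_filter]
  exact ⟨hz, w, hw, by rwa [hEw, add_zero]⟩

open Classical in
noncomputable def decode (E : U →ₗ[K] V) (S : Finset V) (y : V) : U :=
  if h : ∃ x, y - E x ∈ S then h.choose else 0

theorem filter_decode_ne_subset_confusableErrors [DecidableEq U] (E : U →ₗ[K] V)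
    (S : Finset V) (x : U) :
    {z ∈ S | decode E S (E x + z) ≠ x} ⊆ confusableErrors E S := by
  intro z hz
  simp only [mem_filter] at hz
  obtain ⟨hzS, hdec⟩ := hz
  have hex : ∃ x', E x + z - E x' ∈ S := ⟨x, by simpa using hzS⟩
  rw [decode, dif_pos hex] at hdec
  simp only [confusableErrors, mem_filter]
  refine ⟨hzS, x - hex.choose, sub_ne_zero.2 hdec.symm, ?_⟩
  convert hex.choose_spec using 1
  rw [map_sub]
  abel

end LinearCodes

theorem two_pow_mul_two_pow_le_of_le_logb {n m k : ℕ} {ε : ℝ} (hε : 0 < ε)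
    (hrate : (k : ℝ) ≤ n - m - 2 * Real.logb 2 (1 / ε)) :
    (2 : ℝ) ^ k * 2 ^ m ≤ 2 ^ n * ε ^ 2 := by
  have h : (k : ℝ) + m ≤ n + Real.logb 2 (ε ^ 2) := by
    rw [one_div, Real.logb_inv] at hrate
    rw [Real.logb_pow]
    push_cast
    linarith
  have := Real.rpow_le_rpow_of_exponent_le one_le_two h
  rwa [Real.rpow_add two_pos, Real.rpow_add two_pos, Real.rpow_logb two_pos (by norm_num)
    (by positivity), Real.rpow_natCast, Real.rpow_natCast, Real.rpow_natCast] at this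

open Classical in
theorem exists_good_linear_code_for_flat_errors_general
    (n m k : ℕ) (ε : ℝ) (hε : 0 < ε) (hε1 : ε ≤ 1)
    (hrate : (k : ℝ) ≤ (n : ℝ) - m - 2 * Real.logb 2 (1 / ε))
    (S : Finset (Fin n → ZMod 2)) (hS : S.card = 2 ^ m) :
    ∃ (Enc : (Fin k → ZMod 2) →ₗ[ZMod 2] (Fin n → ZMod 2))
      (Dec : (Fin n → ZMod 2) → (Fin k → ZMod 2)),
      Function.Injective Enc ∧
      ∀ x : Fin k → ZMod 2,
        ((S.filter (fun z => Dec (Enc x + z) ≠ x)).card : ℝ) ≤ ε * 2 ^ m := by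
  obtain ⟨E, hE⟩ := exists_card_confusableErrors_mul_lt (K := ZMod 2) (U := Fin k → ZMod 2)
    (S := S) (card_pos.1 (by simp [hS]))
  simp only [Fintype.card_pi, ZMod.card, prod_const, card_univ, Fintype.card_fin, hS] at hE
  have hconf : (#(confusableErrors E S) : ℝ) < ε ^ 2 * 2 ^ m := by
    refine lt_of_mul_lt_mul_right ?_ (by positivity : (0 : ℝ) ≤ 2 ^ n)
    calc (#(confusableErrors E S) : ℝ) * 2 ^ n < 2 ^ k * 2 ^ m * 2 ^ m := by
          rw [mul_assoc, ← sq]; exact_mod_cast hE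
      _ ≤ 2 ^ n * ε ^ 2 * 2 ^ m :=
          mul_le_mul_of_nonneg_right (two_pow_mul_two_pow_le_of_le_logb hε hrate) (by positivity)
      _ = ε ^ 2 * 2 ^ m * 2 ^ n := by ring
  have hε2 : ε ^ 2 * 2 ^ m ≤ ε * 2 ^ m :=
    mul_le_mul_of_nonneg_right (pow_le_of_le_one hε.le hε1 two_ne_zero) (by positivity)
  have hlt : #(confusableErrors E S) < #S := by
    have : ε * (2 : ℝ) ^ m ≤ #S := by
      rw [hS]; push_cast; exact mul_le_of_le_one_left (by positivity) hε1
    exact_mod_cast hconf.trans_le (hε2.trans this)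
  refine ⟨E, decode E S, injective_of_card_confusableErrors_lt hlt, fun x => ?_⟩
  exact (Nat.cast_le.2 (card_le_card (filter_decode_ne_subset_confusableErrors E S x))).trans
    (hconf.le.trans hε2)

open Classical in
/-- Existence of good linear codes for flat errors (Proposition 3.2). -/
theorem exists_good_linear_code_for_flat_errors
    (n m k : ℕ) (ε : ℝ) (hε : 0 < ε) (hε1 : ε ≤ 1) (hk : k ≤ n)
    (hrate : (k : ℝ) ≤ (n : ℝ) - m - 2 * Real.logb 2 (1 / ε))
    (S : Finset (Fin n → ZMod 2)) (hS : S.card = 2 ^ m) :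
    ∃ (Enc : (Fin k → ZMod 2) →ₗ[ZMod 2] (Fin n → ZMod 2))
      (Dec : (Fin n → ZMod 2) → (Fin k → ZMod 2)),
      Function.Injective Enc ∧
      ∀ x : Fin k → ZMod 2,
        ((S.filter (fun z => Dec (Enc x + z) ≠ x)).card : ℝ) ≤ ε * 2 ^ m :=
  exists_good_linear_code_for_flat_errors_general n m k ε hε hε1 hrate S hS
end

section
/- Converse bound for flat distributions (Proposition 3.3): Let n, m, k be natural numbers, ε ∈ [0,1) a real number, S ⊆ 𝔽₂ⁿ a finite set with |S| = 2^m, and let Enc : 𝔽₂ᵏ → 𝔽₂ⁿ and Dec : 𝔽₂ⁿ → 𝔽₂ᵏ be arbitrary functions. If for every message x ∈ 𝔽₂ᵏ the number of z ∈ S with Dec(Enc(x) + z) = x is at least (1−ε)·2^m, then (1−ε)·2^m·2^k ≤ 2^n. In particular, the rate R = k/n satisfies R ≤ 1 − m/n + log₂(1/(1−ε))/n. -/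
/-!
Translating the decodable noise patterns for a message `x` by `Enc x` is injective and lands in
the decoding region `Dec⁻¹ {x}`. The decoding regions of distinct messages are disjoint, so the
numbers of decodable patterns, summed over all `2 ^ k` messages, are at most `2 ^ n`; taking
`logb 2` gives the rate bound.
-/

open Finset

section Decoding

variable {G M : Type*} [Add G] [IsLeftCancelAdd G] [Fintype G] [DecidableEq M]
  (S : Finset G) (Enc : M → G) (Dec : G → M)

theorem card_filter_decode_add_le_card_fiber (x : M) :
    #{z ∈ S | Dec (Enc x + z) = x} ≤ #{y | Dec y = x} :=
  card_le_card_of_injOn (Enc x + ·) (fun z hz => by simpa using (mem_filter.1 hz).2)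
    (add_right_injective (Enc x)).injOn

theorem sum_card_filter_decode_add_le_card [Fintype M] :
    ∑ x, #{z ∈ S | Dec (Enc x + z) = x} ≤ Fintype.card G :=
  calc ∑ x, #{z ∈ S | Dec (Enc x + z) = x}
      ≤ ∑ x, #{y | Dec y = x} :=
        sum_le_sum fun x _ => card_filter_decode_add_le_card_fiber S Enc Dec x
    _ = Fintype.card G := (card_eq_sum_card_fiberwise fun y _ => mem_univ (Dec y)).symm

theorem card_mul_le_card_of_le_card_filter_decode_add [Fintype M] {c : ℝ}
    (h : ∀ x, c ≤ #{z ∈ S | Dec (Enc x + z) = x}) :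
    Fintype.card M * c ≤ Fintype.card G := by
  calc Fintype.card M * c = ∑ _x : M, c := by simp
    _ ≤ ∑ x, (#{z ∈ S | Dec (Enc x + z) = x} : ℝ) := sum_le_sum fun x _ => h x
    _ ≤ Fintype.card G := by exact_mod_cast sum_card_filter_decode_add_le_card S Enc Dec

end Decoding

theorem add_add_logb_le_of_mul_two_pow_le {δ : ℝ} (hδ : 0 < δ) {m k n : ℕ}
    (h : δ * 2 ^ m * 2 ^ k ≤ (2 : ℝ) ^ n) :
    (k : ℝ) + m + Real.logb 2 δ ≤ n := by
  have hlog := Real.logb_le_logb_of_le one_lt_two (by positivity : 0 < δ * 2 ^ m * 2 ^ k) h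
  rw [Real.logb_mul (by positivity) (by positivity), Real.logb_mul hδ.ne' (by positivity),
    Real.logb_pow, Real.logb_pow, Real.logb_pow, Real.logb_self_eq_one one_lt_two] at hlog
  linarith

open Classical in
theorem converse_bound_for_flat_distributions_general
    (n m k : ℕ) (ε : ℝ) (hε1 : ε < 1)
    (S : Finset (Fin n → ZMod 2))
    (Enc : (Fin k → ZMod 2) → (Fin n → ZMod 2))
    (Dec : (Fin n → ZMod 2) → (Fin k → ZMod 2))
    (h : ∀ x : Fin k → ZMod 2,
      (1 - ε) * 2 ^ m ≤ ((S.filter (fun z => Dec (Enc x + z) = x)).card : ℝ)) :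
    (1 - ε) * 2 ^ m * 2 ^ k ≤ (2 : ℝ) ^ n ∧
    (0 < n → (k : ℝ) / n ≤ 1 - (m : ℝ) / n + Real.logb 2 (1 / (1 - ε)) / n) := by
  have hvolume : (1 - ε) * 2 ^ m * 2 ^ k ≤ (2 : ℝ) ^ n := by
    have := card_mul_le_card_of_le_card_filter_decode_add S Enc Dec h
    simp only [Fintype.card_fun, ZMod.card, Fintype.card_fin, Nat.cast_pow, Nat.cast_ofNat] at this
    linarith
  refine ⟨hvolume, fun hn => ?_⟩
  have hrate := add_add_logb_le_of_mul_two_pow_le (sub_pos.2 hε1) hvolume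
  have hnR : (0 : ℝ) < n := by exact_mod_cast hn
  rw [one_div, Real.logb_inv, div_le_iff₀ hnR, add_mul, sub_mul, one_mul,
    div_mul_cancel₀ _ hnR.ne', div_mul_cancel₀ _ hnR.ne']
  linarith

open Classical in
/-- Converse bound for flat distributions (Proposition 3.3). -/
theorem converse_bound_for_flat_distributions
    (n m k : ℕ) (ε : ℝ) (hε : 0 ≤ ε) (hε1 : ε < 1)
    (S : Finset (Fin n → ZMod 2)) (hS : S.card = 2 ^ m)
    (Enc : (Fin k → ZMod 2) → (Fin n → ZMod 2))
    (Dec : (Fin n → ZMod 2) → (Fin k → ZMod 2))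
    (h : ∀ x : Fin k → ZMod 2,
      (1 - ε) * 2 ^ m ≤ ((S.filter (fun z => Dec (Enc x + z) = x)).card : ℝ)) :
    (1 - ε) * 2 ^ m * 2 ^ k ≤ (2 : ℝ) ^ n ∧
    (0 < n → (k : ℝ) / n ≤ 1 - (m : ℝ) / n + Real.logb 2 (1 / (1 - ε)) / n) :=
  converse_bound_for_flat_distributions_general n m k ε hε1 S Enc Dec h
end

section
/- No single code corrects all flat distributions of a given entropy (Proposition 3.4): Let n, k, m be natural numbers with 1 ≤ m, let Enc : 𝔽₂ᵏ → 𝔽₂ⁿ be injective and Dec : 𝔽₂ⁿ → 𝔽₂ᵏ be arbitrary, and let S be any set of 2^m distinct codewords, i.e., S ⊆ Enc(𝔽₂ᵏ) with |S| = 2^m. Then there exists a message x ∈ 𝔽₂ᵏ with Enc(x) ∈ S such that the number of z ∈ S with Dec(Enc(x) + z) ≠ x is at least 2^{m−1}. Consequently, the uniform distribution over S — a flat distribution of entropy m — is not corrected by the code (Enc, Dec) with any error ε < 1/2. -/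
/-!
Pair up the codewords of `S`: for distinct `c, c' ∈ S` the received word `c + c' = c' + c` is
both "`c` hit by the error `c'`" and "`c'` hit by the error `c`", so the decoder fails on at least
one of the two. The failures thus form a tournament on `S`, and some vertex of a tournament on
`2 ^ m` vertices has out-degree at least `(2 ^ m - 1) / 2`, hence at least `2 ^ (m - 1)`.
-/

namespace Finset

variable {α : Type*}

theorem card_offDiag_le_two_mul_card_filter_of_total [DecidableEq α] (S : Finset α) (r : α → α → Prop)
    [DecidableRel r] (h : ∀ a ∈ S, ∀ b ∈ S, a ≠ b → r a b ∨ r b a) :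
    #S.offDiag ≤ 2 * #{p ∈ S ×ˢ S | r p.1 p.2} := by
  set T := {p ∈ S ×ˢ S | r p.1 p.2}
  have hcover : S.offDiag ⊆ T ∪ T.image Prod.swap := by
    rintro ⟨a, b⟩ hab
    obtain ⟨ha, hb, hne⟩ := mem_offDiag.mp hab
    rcases h a ha b hb hne with hr | hr
    · exact mem_union_left _ (by simp [T, ha, hb, hr])
    · exact mem_union_right _ (mem_image.mpr ⟨(b, a), by simp [T, ha, hb, hr], rfl⟩)
  calc #S.offDiag ≤ #(T ∪ T.image Prod.swap) := card_le_card hcover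
    _ ≤ #T + #T := (card_union_le _ _).trans (Nat.add_le_add_left card_image_le _)
    _ = 2 * #T := (two_mul _).symm

theorem card_filter_product_eq_sum (S : Finset α) (r : α → α → Prop) [DecidableRel r] :
    #{p ∈ S ×ˢ S | r p.1 p.2} = ∑ a ∈ S, #{b ∈ S | r a b} := by
  simp only [card_filter, sum_product]

theorem exists_card_sub_one_le_two_mul_card_filter_of_total [DecidableEq α] {S : Finset α} (hS : S.Nonempty)
    (r : α → α → Prop) [DecidableRel r] (h : ∀ a ∈ S, ∀ b ∈ S, a ≠ b → r a b ∨ r b a) :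
    ∃ a ∈ S, #S - 1 ≤ 2 * #{b ∈ S | r a b} := by
  refine exists_le_of_sum_le hS ?_
  calc ∑ _a ∈ S, (#S - 1) = #S.offDiag := by
        rw [sum_const, smul_eq_mul, offDiag_card, Nat.mul_sub_one]
    _ ≤ 2 * ∑ a ∈ S, #{b ∈ S | r a b} := by
        rw [← card_filter_product_eq_sum]
        exact card_offDiag_le_two_mul_card_filter_of_total S r h
    _ = ∑ a ∈ S, 2 * #{b ∈ S | r a b} := mul_sum _ _ _

end Finset

theorem decode_ne_invFun_or_decode_ne_invFun {M G : Type*} [Nonempty M] [AddCommMagma G]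
    (Enc : M → G) (Dec : G → M) {c c' : G} (hc : c ∈ Set.range Enc)
    (hc' : c' ∈ Set.range Enc) (hne : c ≠ c') :
    Dec (c + c') ≠ Function.invFun Enc c ∨ Dec (c' + c) ≠ Function.invFun Enc c' := by
  by_contra! h
  apply hne
  rw [← Function.invFun_eq hc, ← Function.invFun_eq hc', ← h.1, ← h.2, add_comm]

open Classical in
theorem no_code_corrects_all_flat_distributions_general
    (n k m : ℕ) (hm : 1 ≤ m)
    (Enc : (Fin k → ZMod 2) → (Fin n → ZMod 2))
    (Dec : (Fin n → ZMod 2) → (Fin k → ZMod 2))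
    (S : Finset (Fin n → ZMod 2)) (hS : ↑S ⊆ Set.range Enc)
    (hcard : S.card = 2 ^ m) :
    ∃ x : Fin k → ZMod 2, Enc x ∈ S ∧
      2 ^ (m - 1) ≤ (S.filter (fun z => Dec (Enc x + z) ≠ x)).card := by
  have hne : S.Nonempty := Finset.card_pos.mp (hcard ▸ Nat.two_pow_pos m)
  obtain ⟨c, hc, hfail⟩ := Finset.exists_card_sub_one_le_two_mul_card_filter_of_total hne
    (fun c z => Dec (c + z) ≠ Function.invFun Enc c)
    fun c hc c' hc' => decode_ne_invFun_or_decode_ne_invFun Enc Dec (hS hc) (hS hc')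
  have hEnc : Enc (Function.invFun Enc c) = c := Function.invFun_eq (hS hc)
  have hpow : 2 ^ m = 2 * 2 ^ (m - 1) := by rw [← pow_succ', Nat.sub_add_cancel hm]
  refine ⟨Function.invFun Enc c, ?_, ?_⟩ <;> rw [hEnc]
  · exact hc
  · omega

open Classical in
/-- No single code corrects all flat distributions of a given entropy
(Proposition 3.4). -/
theorem no_code_corrects_all_flat_distributions
    (n k m : ℕ) (hm : 1 ≤ m)
    (Enc : (Fin k → ZMod 2) → (Fin n → ZMod 2)) (hEnc : Function.Injective Enc)
    (Dec : (Fin n → ZMod 2) → (Fin k → ZMod 2))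
    (S : Finset (Fin n → ZMod 2)) (hS : ↑S ⊆ Set.range Enc)
    (hcard : S.card = 2 ^ m) :
    ∃ x : Fin k → ZMod 2, Enc x ∈ S ∧
      2 ^ (m - 1) ≤ (S.filter (fun z => Dec (Enc x + z) ≠ x)).card :=
  no_code_corrects_all_flat_distributions_general n k m hm Enc Dec S hS hcard
end
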